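/- Let (w_k)_{k≥1} be an i.i.d. sequence of standard Gaussian vectors in ℝⁿ, and let 0 < δ ≤ 1/2. Then with probability at least 1 − δ, for every positive integer k, ‖w_k‖ ≤ 2·√(n+1)·√(log(k/δ)). -/

import Mathlib

open MeasureTheory ProbabilityTheory

noncomputable def eNorm {n : ℕ} (v : Fin n → ℝ) : ℝ := Real.sqrt (∑ j, v j ^ 2)

/-! For a standard Gaussian `X` and `t < 1/2`, `𝔼 exp (t X²) = (1 - 2t)^(-1/2)`. At `t = 3/8` the
squared norm of a standard Gaussian vector in `ℝⁿ` therefore has moment generating function `2ⁿ`,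
and the Chernoff bound gives `ℙ (‖w_k‖² ≥ 4 (n+1) log (k/δ)) ≤ 2ⁿ (δ/k)^(3(n+1)/2) ≤ (δ/k)²`
as soon as `n ≥ 1`. A union bound over `k` loses `∑ (δ/k)² = δ² π²/6 ≤ δ`. -/

open Real

lemma mgf_sq_gaussianReal {t : ℝ} (ht : t < 1 / 2) :
    mgf (fun x => x ^ 2) (gaussianReal 0 1) t = (√(1 - 2 * t))⁻¹ := by
  have hdensity : ∀ x : ℝ, gaussianPDFReal 0 1 x • exp (t * x ^ 2)
      = (√(2 * π))⁻¹ * exp (-(1 / 2 - t) * x ^ 2) := by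
    intro x
    rw [gaussianPDFReal, smul_eq_mul, mul_assoc, ← exp_add]
    simp only [NNReal.coe_one, mul_one, sub_zero]
    ring_nf
  rw [mgf, integral_gaussianReal_eq_integral_smul one_ne_zero]
  simp_rw [hdensity]
  rw [integral_const_mul, integral_gaussian,
    show π / (1 / 2 - t) = 2 * π / (1 - 2 * t) by field_simp,
    sqrt_div' _ (by linarith : (0:ℝ) ≤ 1 - 2 * t)]
  have : √(2 * π) ≠ 0 := by positivity
  field_simp

section
variable {Ω : Type*} [MeasurableSpace Ω] {P : Measure Ω} {t : ℝ}

lemma mgf_sq_of_map_eq_gaussianReal {X : Ω → ℝ} (hX : Measurable X)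
    (hlaw : P.map X = gaussianReal 0 1) (ht : t < 1 / 2) :
    mgf (fun ω => X ω ^ 2) P t = (√(1 - 2 * t))⁻¹ := by
  rw [← mgf_sq_gaussianReal ht, ← hlaw, mgf_map hX.aemeasurable]
  · rfl
  · exact (measurable_const_mul t |>.comp (measurable_id.pow_const 2)).exp.aestronglyMeasurable

lemma integrable_exp_mul_sq_of_map_eq_gaussianReal {X : Ω → ℝ} (hX : Measurable X)
    (hlaw : P.map X = gaussianReal 0 1) (ht : t < 1 / 2) :
    Integrable (fun ω => exp (t * X ω ^ 2)) P := by
  have hmgf := mgf_sq_of_map_eq_gaussianReal hX hlaw ht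
  rw [mgf] at hmgf
  refine Integrable.of_integral_ne_zero ?_
  rw [hmgf]
  exact (inv_pos.2 (sqrt_pos.2 (by linarith))).ne'

lemma measureReal_le_sum_sq_le [IsProbabilityMeasure P] {ι : Type*} [Fintype ι]
    {X : ι → Ω → ℝ} (hX : ∀ i, Measurable (X i)) (hindep : iIndepFun X P)
    (hlaw : ∀ i, P.map (X i) = gaussianReal 0 1) (a : ℝ) (ht0 : 0 ≤ t) (ht : t < 1 / 2) :
    P.real {ω | a ≤ ∑ i, X i ω ^ 2} ≤ exp (-t * a) * (√(1 - 2 * t))⁻¹ ^ Fintype.card ι := by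
  set Y : ι → Ω → ℝ := fun i ω => X i ω ^ 2
  have hY : ∀ i, Measurable (Y i) := fun i => (hX i).pow_const 2
  have hindepY : iIndepFun Y P := hindep.comp (fun _ x => x ^ 2) fun _ => measurable_id.pow_const 2
  have hmgf : mgf (∑ i, Y i) P t = (√(1 - 2 * t))⁻¹ ^ Fintype.card ι := by
    rw [hindepY.mgf_sum hY, Finset.prod_eq_pow_card fun i _ =>
      mgf_sq_of_map_eq_gaussianReal (hX i) (hlaw i) ht, Finset.card_univ]
  have hint : Integrable (fun ω => exp (t * (∑ i, Y i) ω)) P :=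
    hindepY.integrable_exp_mul_sum hY fun i _ =>
      integrable_exp_mul_sq_of_map_eq_gaussianReal (hX i) (hlaw i) ht
  simpa only [← hmgf, Finset.sum_apply] using measure_ge_le_exp_mul_mgf a ht0 hint

end

lemma exp_mul_log_inv_mul_two_pow_le {x : ℝ} (hx0 : 0 < x) (hx : x ≤ 1 / 2) {n : ℕ}
    (hn : 1 ≤ n) : exp (-(3 / 8) * (4 * (n + 1) * log x⁻¹)) * 2 ^ n ≤ x ^ 2 := by
  have hlog : 0 ≤ log x⁻¹ := log_nonneg ((one_le_inv₀ hx0).2 (by linarith))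
  have hn' : (1 : ℝ) ≤ n := by exact_mod_cast hn
  calc exp (-(3 / 8) * (4 * (n + 1) * log x⁻¹)) * 2 ^ n
      ≤ exp (((n + 2 : ℕ) : ℝ) * -log x⁻¹) * 2 ^ n := by
        gcongr ?_ * _
        rw [exp_le_exp]
        push_cast
        nlinarith
    _ = x ^ 2 * (2 * x) ^ n := by
        rw [exp_nat_mul, log_inv, neg_neg, exp_log hx0]
        ring
    _ ≤ x ^ 2 := by
        have : (2 * x) ^ n ≤ 1 := pow_le_one₀ (by positivity) (by linarith)
        nlinarith [sq_nonneg x]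

lemma measureReal_lt_eNorm_le {Ω : Type*} [MeasurableSpace Ω] {P : Measure Ω}
    [IsProbabilityMeasure P] {n : ℕ} {W : Ω → Fin n → ℝ} (hW : Measurable W)
    (hindep : iIndepFun (fun j ω => W ω j) P)
    (hlaw : ∀ j, P.map (fun ω => W ω j) = gaussianReal 0 1) {x : ℝ} (hx0 : 0 < x)
    (hx : x ≤ 1 / 2) :
    P.real {ω | 2 * √(n + 1) * √(log x⁻¹) < eNorm (W ω)} ≤ x ^ 2 := by
  obtain rfl | hn := Nat.eq_zero_or_pos n
  · have hempty : {ω | 2 * √((0 : ℕ) + 1) * √(log x⁻¹) < eNorm (W ω)} = ∅ := by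
      ext ω
      simp only [eNorm, Finset.univ_eq_empty, Finset.sum_empty, sqrt_zero, Set.mem_ofPred_eq,
        Set.mem_empty_iff_false, iff_false, not_lt]
      positivity
    rw [hempty, measureReal_empty]
    positivity
  have hsub : {ω | 2 * √(n + 1) * √(log x⁻¹) < eNorm (W ω)} ⊆
      {ω | 4 * (n + 1) * log x⁻¹ ≤ ∑ j, W ω j ^ 2} := by
    intro ω hω
    have hlog : 0 ≤ log x⁻¹ := log_nonneg ((one_le_inv₀ hx0).2 (by linarith))
    have hsq := (lt_sqrt (by positivity)).1 hω
    rw [mul_pow, mul_pow, sq_sqrt (by positivity), sq_sqrt hlog] at hsq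
    simp only [Set.mem_ofPred_eq]
    linarith
  have hmgf : (√(1 - 2 * (3 / 8 : ℝ)))⁻¹ = 2 := by
    rw [show 1 - 2 * (3 / 8 : ℝ) = 2⁻¹ ^ 2 by norm_num, sqrt_sq (by norm_num), inv_inv]
  calc P.real {ω | 2 * √(n + 1) * √(log x⁻¹) < eNorm (W ω)}
      ≤ P.real {ω | 4 * (n + 1) * log x⁻¹ ≤ ∑ j, W ω j ^ 2} := measureReal_mono hsub
    _ ≤ exp (-(3 / 8) * (4 * (n + 1) * log x⁻¹)) * 2 ^ n := by
        simpa only [hmgf, Fintype.card_fin] using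
          measureReal_le_sum_sq_le (t := 3 / 8) (fun j => hW.eval) hindep hlaw _ (by norm_num)
            (by norm_num)
    _ ≤ x ^ 2 := exp_mul_log_inv_mul_two_pow_le hx0 hx hn

lemma hasSum_div_natCast_sq (δ : ℝ) :
    HasSum (fun k : ℕ => (δ / k) ^ 2) (δ ^ 2 * (π ^ 2 / 6)) := by
  simpa only [div_pow, mul_one_div] using hasSum_zeta_two.mul_left (δ ^ 2)

lemma measureReal_iUnion_le_of_hasSum {α : Type*} [MeasurableSpace α] {μ : Measure α}
    [IsFiniteMeasure μ] {A : ℕ → Set α} {f : ℕ → ℝ} {s : ℝ} (hf : HasSum f s)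
    (hA : ∀ k, μ.real (A k) ≤ f k) : μ.real (⋃ k, A k) ≤ s := by
  have hf0 : ∀ k, 0 ≤ f k := fun k => measureReal_nonneg.trans (hA k)
  refine ENNReal.toReal_le_of_le_ofReal (hf.nonneg hf0) ?_
  calc μ (⋃ k, A k) ≤ ∑' k, μ (A k) := measure_iUnion_le A
    _ ≤ ∑' k, ENNReal.ofReal (f k) := ENNReal.tsum_le_tsum fun k =>
        (ENNReal.le_ofReal_iff_toReal_le (measure_ne_top μ _) (hf0 k)).2 (hA k)
    _ = ENNReal.ofReal s := by rw [← ENNReal.ofReal_tsum_of_nonneg hf0 hf.summable, hf.tsum_eq]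

lemma one_sub_le_measureReal_of_measureReal_compl_le {α : Type*} [MeasurableSpace α]
    {μ : Measure α} [IsProbabilityMeasure μ] {s : Set α} {δ : ℝ} (h : μ.real sᶜ ≤ δ) :
    1 - δ ≤ μ.real s := by
  have hunion := measureReal_union_le (μ := μ) s sᶜ
  rw [Set.union_compl_self, probReal_univ] at hunion
  linarith

/-- If `(w k)` is an i.i.d. sequence of standard Gaussian vectors in `ℝⁿ` (all scalar entries
`w k · i`, `(k, i) ∈ ℕ × Fin n`, are i.i.d. standard Gaussians) and `0 < δ ≤ 1/2`, then with
probability at least `1 - δ`, for every positive integer `k`,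
`‖w k‖ ≤ 2 √(n+1) √(log(k/δ))`. -/
theorem stmt_4 {Ω : Type*} [MeasureSpace Ω] [IsProbabilityMeasure (ℙ : Measure Ω)]
    {n : ℕ} (w : ℕ → Ω → Fin n → ℝ) (hmeas : ∀ k, Measurable (w k))
    (hindep : iIndepFun
      (fun p : ℕ × Fin n => fun ω => w p.1 ω p.2) ℙ)
    (hdist : ∀ k i, Measure.map (fun ω => w k ω i) ℙ = gaussianReal 0 1)
    (δ : ℝ) (hδ0 : 0 < δ) (hδ1 : δ ≤ 1 / 2) :
    1 - δ ≤ (ℙ {ω | ∀ k : ℕ, 1 ≤ k →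
        eNorm (w k ω) ≤ 2 * Real.sqrt ((n : ℝ) + 1) * Real.sqrt (Real.log (k / δ))}).toReal := by
  set G := {ω | ∀ k : ℕ, 1 ≤ k → eNorm (w k ω) ≤ 2 * √((n : ℝ) + 1) * √(log (k / δ))}
  have hbad : ∀ k : ℕ,
      (ℙ : Measure Ω).real {ω | ¬(1 ≤ k → eNorm (w k ω) ≤ 2 * √((n : ℝ) + 1) * √(log (k / δ)))}
        ≤ (δ / k) ^ 2 := by
    intro k
    by_cases hk : 1 ≤ k
    · have hx : δ / k ≤ 1 / 2 := by
        rw [div_le_iff₀ (by positivity)]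
        nlinarith [(Nat.one_le_cast (α := ℝ)).2 hk]
      have hindep_k : iIndepFun (fun j ω => w k ω j) ℙ :=
        hindep.precomp (g := fun j : Fin n => (k, j)) fun _ _ h => (Prod.ext_iff.1 h).2
      simpa only [Classical.not_imp, not_le, hk, true_and, inv_div] using
        measureReal_lt_eNorm_le (hmeas k) hindep_k (hdist k) (by positivity) hx
    · simp only [hk, false_implies, not_true_eq_false, Set.ofPred_false, measureReal_empty]
      positivity
  have hG : Gᶜ = ⋃ k : ℕ,
      {ω | ¬(1 ≤ k → eNorm (w k ω) ≤ 2 * √((n : ℝ) + 1) * √(log (k / δ)))} := by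
    ext ω
    simp [G]
  refine one_sub_le_measureReal_of_measureReal_compl_le ?_
  calc (ℙ : Measure Ω).real Gᶜ ≤ δ ^ 2 * (π ^ 2 / 6) := by
        rw [hG]
        exact measureReal_iUnion_le_of_hasSum (hasSum_div_natCast_sq δ) hbad
    _ ≤ δ := by
        have hπ : π ^ 2 / 6 ≤ 2 := by nlinarith [pi_lt_d2, pi_pos]
        nlinarith [mul_le_mul_of_nonneg_left hπ (sq_nonneg δ)]
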